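/- arXiv:2205.07105 — 5 statements merged into one kernel-verified Lean document; each statement's English description precedes it below -/
import Mathlib

section
/- Let Y be a 0-dimensional Tychonoff space, let τ ≥ ℵ₀, and let P and K be compact subsets of Y × ℕ^τ. Then every homeomorphism f : P → K satisfying π₁ ∘ f = π₁|P (where π₁ : Y × ℕ^τ → Y is the projection) can be extended to a homeomorphism f̃ : Y × ℕ^τ → Y × ℕ^τ such that π₁ ∘ f̃ = π₁. -/
open Topology Set

/-- A space is *0-dimensional* if it admits a dense topological embedding into a
compact Hausdorff totally disconnected space (a compactification of covering dimension 0). -/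
def ZeroDimensional (Y : Type u) [TopologicalSpace Y] : Prop :=
  ∃ (Z : Type u) (_ : TopologicalSpace Z), CompactSpace Z ∧ T2Space Z ∧
    TotallyDisconnectedSpace Z ∧ ∃ e : Y → Z, Topology.IsEmbedding e ∧ DenseRange e

/-!
Klee's trick. Since `Y × ℕ^A` has a basis of clopen sets, a continuous map from a compact
subset to the discrete `ℕ` (finitely many values, on disjoint compact fibres that clopen sets
separate) extends continuously; so the second coordinates of `f` and `f⁻¹` extend to continuous
`F, G : Y × ℕ^A → ℕ^A`. On `(Y × ℕ^A) × ℕ^A` the fibrewise shear `(x, w) ↦ (x, w ⋆ F x)`, where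
`⋆` transposes `0` and `F x` coordinatewise, then the exchange `((y, u), w) ↦ ((y, w), u)`, then
the shear by `G`, send `(p, 0)` to `(f p, 0)` for `p ∈ P`. A homeomorphism
`ℕ^A ≃ ℕ^A × ℕ^A` that is `u ↦ (u, 0)` on the compact projection of `P ∪ K`, built
coordinatewise from bijections `ℕ ≃ ℕ × ℕ` that are `s ↦ (s, 0)` on finite sets, transports this
back to `Y × ℕ^A`.
-/

open TopologicalSpace

section ClopenBasis

variable {X X' : Type*} [TopologicalSpace X] [TopologicalSpace X']

theorem ZeroDimensional.t2Space {Y : Type*} [TopologicalSpace Y] (hY : ZeroDimensional Y) :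
    T2Space Y := by
  obtain ⟨Z, _, -, _, -, e, he, -⟩ := hY
  exact he.t2Space

theorem ZeroDimensional.isTopologicalBasis_isClopen {Y : Type*} [TopologicalSpace Y]
    (hY : ZeroDimensional Y) : IsTopologicalBasis {s : Set Y | IsClopen s} := by
  obtain ⟨Z, _, _, _, _, e, he, -⟩ := hY
  refine (_root_.isTopologicalBasis_isClopen.isInducing he.isInducing).of_isOpen_of_subset
    (fun _ hs => hs.isOpen) ?_
  rintro _ ⟨s, hs, rfl⟩
  exact hs.preimage he.continuous

theorem isTopologicalBasis_isClopen_prod (hX : IsTopologicalBasis {s : Set X | IsClopen s})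
    (hX' : IsTopologicalBasis {s : Set X' | IsClopen s}) :
    IsTopologicalBasis {s : Set (X × X') | IsClopen s} :=
  (hX.prod hX').of_isOpen_of_subset (fun _ hs => hs.isOpen) <| by
    rintro _ ⟨s, hs, t, ht, rfl⟩
    exact hs.prod ht

theorem isTopologicalBasis_isClopen_pi {ι : Type*} {π : ι → Type*}
    [∀ i, TopologicalSpace (π i)] (h : ∀ i, IsTopologicalBasis {s : Set (π i) | IsClopen s}) :
    IsTopologicalBasis {s : Set (∀ i, π i) | IsClopen s} :=
  (isTopologicalBasis_pi h).of_isOpen_of_subset (fun _ hs => hs.isOpen) <| by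
    rintro _ ⟨U, F, hU, rfl⟩
    rw [Set.pi_def]
    exact F.finite_toSet.isClopen_biInter fun i hi => (hU i hi).preimage (continuous_apply i)

theorem isTopologicalBasis_isClopen_of_discrete [DiscreteTopology X] :
    IsTopologicalBasis {s : Set X | IsClopen s} :=
  (isTopologicalBasis_singletons X).of_isOpen_of_subset (fun _ hs => hs.isOpen)
    fun s _ => isClopen_discrete s

theorem IsCompact.exists_isClopen_superset_disjoint
    (hX : IsTopologicalBasis {s : Set X | IsClopen s}) {K L : Set X} (hK : IsCompact K)
    (hL : IsClosed L) (hKL : Disjoint K L) : ∃ U, IsClopen U ∧ K ⊆ U ∧ Disjoint U L := by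
  refine hK.induction_on ⟨∅, isClopen_empty, subset_rfl, empty_disjoint _⟩
    (fun s t hst ⟨U, hU, htU, hUL⟩ => ⟨U, hU, hst.trans htU, hUL⟩)
    (fun s t ⟨U, hU, hsU, hUL⟩ ⟨V, hV, htV, hVL⟩ =>
      ⟨U ∪ V, hU.union hV, union_subset_union hsU htV, hUL.union_left hVL⟩) fun x hx => ?_
  obtain ⟨U, hU, hxU, hUL⟩ :=
    hX.exists_subset_of_mem_open (disjoint_left.mp hKL hx) hL.isOpen_compl
  exact ⟨U, mem_nhdsWithin_of_mem_nhds (hU.isOpen.mem_nhds hxU), U, hU, subset_rfl,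
    subset_compl_iff_disjoint_right.mp hUL⟩

end ClopenBasis

section Extension

variable {X β : Type*} [TopologicalSpace X] [T2Space X] [TopologicalSpace β]
  [DiscreteTopology β] [Nonempty β]

theorem IsCompact.exists_continuous_eqOn_of_mapsTo_finset
    (hX : IsTopologicalBasis {s : Set X | IsClopen s}) {P : Set X} (hP : IsCompact P)
    {φ : X → β} (hφ : ContinuousOn φ P) (s : Finset β) (hPs : MapsTo φ P s) :
    ∃ Φ : X → β, Continuous Φ ∧ EqOn Φ φ P := by
  classical
  induction s using Finset.induction_on generalizing P with
  | empty =>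
    refine ⟨fun _ => Classical.arbitrary β, continuous_const, fun x hx => ?_⟩
    simpa using hPs hx
  | @insert v s hv ih =>
    have hcompact : ∀ t : Set β, IsCompact (P ∩ φ ⁻¹' t) := fun t =>
      hP.of_isClosed_subset (hφ.preimage_isClosed_of_isClosed hP.isClosed (isClosed_discrete t))
        inter_subset_left
    obtain ⟨Φ, hΦ, hΦφ⟩ := ih (hcompact s) (hφ.mono inter_subset_left) fun x hx => hx.2
    obtain ⟨U, hU, hvU, hUs⟩ := (hcompact {v}).exists_isClopen_superset_disjoint hX
      (hcompact s).isClosed <| disjoint_left.mpr fun x hxv hxs => hv (hxv.2 ▸ hxs.2)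
    refine ⟨U.piecewise (fun _ => v) Φ,
      continuous_const.piecewise (by simp [hU.frontier_eq]) hΦ, fun x hx => ?_⟩
    rcases Finset.mem_insert.mp (hPs hx) with hxv | hxs
    · rw [piecewise_eq_of_mem _ _ _ (hvU ⟨hx, hxv⟩), hxv]
    · rw [piecewise_eq_of_notMem _ _ _ fun hxU => disjoint_left.mp hUs hxU ⟨hx, hxs⟩]
      exact hΦφ ⟨hx, hxs⟩

theorem IsCompact.exists_continuous_eqOn (hX : IsTopologicalBasis {s : Set X | IsClopen s})
    {P : Set X} (hP : IsCompact P) {φ : X → β} (hφ : ContinuousOn φ P) :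
    ∃ Φ : X → β, Continuous Φ ∧ EqOn Φ φ P := by
  have hfin : (φ '' P).Finite := (hP.image_of_continuousOn hφ).finite_of_discrete
  exact hP.exists_continuous_eqOn_of_mapsTo_finset hX hφ hfin.toFinset fun x hx =>
    hfin.mem_toFinset.mpr (mem_image_of_mem φ hx)

theorem IsCompact.exists_continuous_pi_extension {A : Type*}
    (hX : IsTopologicalBasis {s : Set X | IsClopen s}) {P : Set X} (hP : IsCompact P)
    (φ : P → A → β) (hφ : Continuous φ) :
    ∃ Φ : X → A → β, Continuous Φ ∧ ∀ p : P, Φ p = φ p := by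
  set ψ : X → A → β := Function.extend Subtype.val φ fun _ _ => Classical.arbitrary β
  have hψφ : ∀ p : P, ψ p = φ p := Subtype.val_injective.extend_apply _ _
  have hψ : ContinuousOn ψ P := by
    rw [continuousOn_iff_continuous_domRestrict]
    exact hφ.congr fun p => (hψφ p).symm
  choose Φ hΦ hΦψ using fun a =>
    hP.exists_continuous_eqOn hX ((continuous_apply a).comp_continuousOn hψ)
  exact ⟨fun x a => Φ a x, continuous_pi hΦ, fun p => funext fun a => (hΦψ a p.2).trans
    (congrFun (hψφ p) a)⟩

end Extension

theorem exists_equiv_prod_apply_eq_of_finite {D : Type*} [Countable D] [Infinite D]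
    {S : Set D} (hS : S.Finite) (d : D) : ∃ e : D ≃ D × D, ∀ s ∈ S, e s = (s, d) := by
  classical
  have hinj : Function.Injective fun s : D => (s, d) := fun _ _ h => congrArg Prod.fst h
  set T : Set (D × D) := (fun s => (s, d)) '' S
  have : Infinite ↥Sᶜ := hS.infinite_compl.to_subtype
  have : Infinite ↥Tᶜ := (hS.image _).infinite_compl.to_subtype
  have : Nonempty (↥Sᶜ ≃ ↥Tᶜ) := by
    obtain ⟨_⟩ := nonempty_denumerable ↥Sᶜ
    obtain ⟨_⟩ := nonempty_denumerable ↥Tᶜ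
    exact ⟨Denumerable.equiv₂ _ _⟩
  obtain ⟨eCompl⟩ := this
  refine ⟨(Equiv.Set.sumCompl S).symm.trans
    (((Equiv.Set.image _ S hinj).sumCongr eCompl).trans (Equiv.Set.sumCompl T)), fun s hs => ?_⟩
  simp [Equiv.Set.sumCompl_symm_apply_of_mem hs]

def Homeomorph.arrowProdHomeomorphProdArrow (ι α β : Type*) [TopologicalSpace α]
    [TopologicalSpace β] : (ι → α × β) ≃ₜ (ι → α) × (ι → β) where
  toEquiv := Equiv.arrowProdEquivProdArrow ι (fun _ => α) (fun _ => β)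
  continuous_toFun := by dsimp [Equiv.arrowProdEquivProdArrow]; fun_prop
  continuous_invFun := by dsimp [Equiv.arrowProdEquivProdArrow]; fun_prop

theorem IsCompact.exists_homeomorph_pi_prod {A D : Type*} [TopologicalSpace D]
    [DiscreteTopology D] [Countable D] [Infinite D] {S : Set (A → D)} (hS : IsCompact S)
    (d : D) : ∃ θ : (A → D) ≃ₜ (A → D) × (A → D), ∀ u ∈ S, θ u = (u, fun _ => d) := by
  choose e he using fun a =>
    exists_equiv_prod_apply_eq_of_finite ((hS.image (continuous_apply a)).finite_of_discrete) d
  refine ⟨(Homeomorph.piCongrRight fun a => (e a).toHomeomorphOfDiscrete).trans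
    (Homeomorph.arrowProdHomeomorphProdArrow A D D), fun u hu => ?_⟩
  have hu' : ∀ a, e a (u a) = (u a, d) := fun a => he a _ (mem_image_of_mem _ hu)
  exact Prod.ext (funext fun a => congrArg Prod.fst (hu' a))
    (funext fun a => congrArg Prod.snd (hu' a))

section FiberSwap

variable {X A D : Type*} [TopologicalSpace X] [TopologicalSpace D] [DiscreteTopology D]
  [DecidableEq D] (z : A → D) {c : X → A → D} (hc : Continuous c)

/-- The shear of Klee's trick. It transposes `z` and `c x` coordinatewise because
`Equiv.swap z (c x)` itself is not continuous on `A → D`. -/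
def fiberSwap : X × (A → D) ≃ₜ X × (A → D) :=
  have h : Continuous fun q : X × (A → D) => (q.1, fun a => Equiv.swap (z a) (c q.1 a) (q.2 a)) :=
    continuous_fst.prodMk <| continuous_pi fun a =>
      (continuous_of_discreteTopology (f := fun p : D × D => Equiv.swap (z a) p.1 p.2)).comp <|
        ((continuous_apply a).comp (hc.comp continuous_fst)).prodMk
          ((continuous_apply a).comp continuous_snd)
  { toFun q := (q.1, fun a => Equiv.swap (z a) (c q.1 a) (q.2 a))
    invFun q := (q.1, fun a => Equiv.swap (z a) (c q.1 a) (q.2 a))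
    left_inv q := by simp
    right_inv q := by simp
    continuous_toFun := h
    continuous_invFun := h }

theorem fiberSwap_mk_left (x : X) : fiberSwap z hc (x, z) = (x, c x) := by
  simp [fiberSwap]

theorem fiberSwap_mk_right (x : X) : fiberSwap z hc (x, c x) = (x, z) := by
  simp [fiberSwap]

end FiberSwap

/-- Klee's trick: `(p, z) ↦ (p, F p) ↦ ((p.1, F p), p.2) = (f p, G (f p)) ↦ (f p, z)`. -/
theorem exists_fiberwise_homeomorph_prod_of_extensions {Y A D : Type*} [TopologicalSpace Y]
    [TopologicalSpace D] [DiscreteTopology D] {P K : Set (Y × (A → D))} (f : P ≃ₜ K)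
    (hf : ∀ p : P, (f p : Y × (A → D)).1 = (p : Y × (A → D)).1)
    {F G : Y × (A → D) → A → D} (hF : Continuous F) (hG : Continuous G)
    (hFf : ∀ p : P, F p = (f p : Y × (A → D)).2) (hGf : ∀ k : K, G k = (f.symm k : Y × (A → D)).2)
    (z : A → D) :
    ∃ Φ : (Y × (A → D)) × (A → D) ≃ₜ (Y × (A → D)) × (A → D),
      (∀ p : P, Φ (p, z) = ((f p : Y × (A → D)), z)) ∧ ∀ w, (Φ w).1.1 = w.1.1 := by
  classical
  let swapFibers : (Y × (A → D)) × (A → D) ≃ₜ (Y × (A → D)) × (A → D) :=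
    ((Homeomorph.prodAssoc _ _ _).trans
      ((Homeomorph.refl Y).prodCongr (Homeomorph.prodComm _ _))).trans
        (Homeomorph.prodAssoc _ _ _).symm
  refine ⟨(fiberSwap z hF).trans (swapFibers.trans (fiberSwap z hG)), fun p => ?_, fun w => rfl⟩
  have hfp : ((p : Y × (A → D)).1, F p) = f p := by rw [hFf, ← hf p]
  have hGfp : G ((p : Y × (A → D)).1, F p) = (p : Y × (A → D)).2 := by
    rw [hfp, hGf, f.symm_apply_apply]
  calc fiberSwap z hG (swapFibers (fiberSwap z hF (p, z)))
      = fiberSwap z hG (((p : Y × (A → D)).1, F p), (p : Y × (A → D)).2) := by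
        rw [fiberSwap_mk_left]; rfl
    _ = ((f p : Y × (A → D)), z) := by rw [← hGfp, fiberSwap_mk_right, hfp]

theorem exists_fiberwise_homeomorph_extending {Y A D : Type*} [TopologicalSpace Y] [T2Space Y]
    (hY : IsTopologicalBasis {s : Set Y | IsClopen s}) [TopologicalSpace D] [DiscreteTopology D]
    [Countable D] [Infinite D] {P K : Set (Y × (A → D))} (hP : IsCompact P) (hK : IsCompact K)
    (f : P ≃ₜ K) (hf : ∀ p : P, (f p : Y × (A → D)).1 = (p : Y × (A → D)).1) :
    ∃ F : (Y × (A → D)) ≃ₜ (Y × (A → D)),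
      (∀ p : P, F p = (f p : Y × (A → D))) ∧ ∀ x : Y × (A → D), (F x).1 = x.1 := by
  have hX : IsTopologicalBasis {s : Set (Y × (A → D)) | IsClopen s} :=
    isTopologicalBasis_isClopen_prod hY
      (isTopologicalBasis_isClopen_pi fun _ => isTopologicalBasis_isClopen_of_discrete)
  obtain ⟨F, hF, hFf⟩ := hP.exists_continuous_pi_extension hX (fun p => (f p : Y × (A → D)).2)
    (by fun_prop)
  obtain ⟨G, hG, hGf⟩ := hK.exists_continuous_pi_extension hX
    (fun k => (f.symm k : Y × (A → D)).2) (by fun_prop)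
  obtain ⟨d⟩ : Nonempty D := inferInstance
  obtain ⟨Φ, hΦf, hΦ⟩ :=
    exists_fiberwise_homeomorph_prod_of_extensions f hf hF hG hFf hGf fun _ => d
  obtain ⟨θ, hθ⟩ := ((hP.union hK).image continuous_snd).exists_homeomorph_pi_prod d
  -- `ι` identifies `P ∪ K` with `(P ∪ K) × {const d}`, where Klee's trick applies.
  let ι : Y × (A → D) ≃ₜ (Y × (A → D)) × (A → D) :=
    ((Homeomorph.refl Y).prodCongr θ).trans (Homeomorph.prodAssoc _ _ _).symm
  have hι : ∀ x ∈ P ∪ K, ι x = (x, fun _ => d) := fun x hx => by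
    change ((x.1, (θ x.2).1), (θ x.2).2) = _
    rw [hθ x.2 (mem_image_of_mem _ hx)]
  refine ⟨ι.trans (Φ.trans ι.symm), fun p => ?_, fun x => hΦ (ι x)⟩
  rw [Homeomorph.trans_apply, Homeomorph.trans_apply, hι p (Or.inl p.2), hΦf,
    ← hι (f p) (Or.inr (f p).2), Homeomorph.symm_apply_apply]

theorem stmt0_general {Y : Type u} [TopologicalSpace Y] (hY : ZeroDimensional Y)
    (A : Type v)
    (P K : Set (Y × (A → ℕ))) (hP : IsCompact P) (hK : IsCompact K)
    (f : ↥P ≃ₜ ↥K) (hf : ∀ p : P, ((f p : Y × (A → ℕ)).1 = (p : Y × (A → ℕ)).1)) :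
    ∃ F : (Y × (A → ℕ)) ≃ₜ (Y × (A → ℕ)),
      (∀ p : P, F (p : Y × (A → ℕ)) = (f p : Y × (A → ℕ))) ∧
      (∀ z : Y × (A → ℕ), (F z).1 = z.1) := by
  have := hY.t2Space
  exact exists_fiberwise_homeomorph_extending hY.isTopologicalBasis_isClopen hP hK f hf

/-- **Theorem 1.1**: if `Y` is a 0-dimensional Tychonoff space, `τ ≥ ℵ₀` is the
cardinality of the index set `A`, and `P`, `K` are compact subsets of `Y × ℕ^τ`, then every
homeomorphism `f : P → K` with `π₁ ∘ f = π₁|P` extends to a homeomorphism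
`f̃ : Y × ℕ^τ → Y × ℕ^τ` with `π₁ ∘ f̃ = π₁`. -/
theorem stmt0 {Y : Type u} [TopologicalSpace Y] [T35Space Y] (hY : ZeroDimensional Y)
    (A : Type v) [Infinite A]
    (P K : Set (Y × (A → ℕ))) (hP : IsCompact P) (hK : IsCompact K)
    (f : ↥P ≃ₜ ↥K) (hf : ∀ p : P, ((f p : Y × (A → ℕ)).1 = (p : Y × (A → ℕ)).1)) :
    ∃ F : (Y × (A → ℕ)) ≃ₜ (Y × (A → ℕ)),
      (∀ p : P, F (p : Y × (A → ℕ)) = (f p : Y × (A → ℕ))) ∧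
      (∀ z : Y × (A → ℕ), (F z).1 = z.1) :=
  stmt0_general hY A P K hP hK f hf
end

section
/- Let τ ≥ ℵ₀ and let P and K be compact subsets of ℕ^τ. Then every homeomorphism between P and K can be extended to a homeomorphism of ℕ^τ onto itself. -/
/-!
A continuous map from a compact subset of a product of discrete spaces to a discrete space depends
on finitely many coordinates only, so `f` and `f⁻¹` extend to continuous self-maps `φ` and `ψ` of
`X = A → ℤ` (ℤ replaces ℕ only to have a group structure). Klee's trick: the homeomorphism
`(x, y) ↦ (x, y + φ x) ↦ (y + φ x, x) ↦ (y + φ x, x - ψ (y + φ x))` of `X × X` sends `(p, 0)` to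
`(f p, 0)`. Finally, the finite projections of `P ∪ K` give coordinatewise bijections `ℤ ≃ ℤ × ℤ`
that are `s ↦ (s, 0)` on them, hence a homeomorphism `X ≃ₜ X × X` that is `x ↦ (x, 0)` on `P ∪ K`,
and conjugating by it yields the extension of `f`.
-/

open Topology Set

universe u

section FiniteDetermination

variable {ι : Type*} {X : ι → Type*} [∀ i, TopologicalSpace (X i)] [∀ i, DiscreteTopology (X i)]
  {Y : Type*} [TopologicalSpace Y] [DiscreteTopology Y]

theorem IsCompact.exists_finset_forall_eq_of_continuous {P : Set (∀ i, X i)} (hP : IsCompact P)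
    {g : P → Y} (hg : Continuous g) :
    ∃ B : Finset ι, ∀ p q : P, (∀ i ∈ B, (p : ∀ i, X i) i = (q : ∀ i, X i) i) → g p = g q := by
  classical
  let box (I : Finset ι) (x : ∀ i, X i) : Set (∀ i, X i) := (I : Set ι).pi fun i => {x i}
  have hlocal : ∀ p : P, ∃ I : Finset ι, ∀ q : P, (q : ∀ i, X i) ∈ box I p → g q = g p := by
    intro p
    obtain ⟨W, hW, hWg⟩ := isOpen_induced_iff.1 ((isOpen_discrete {g p}).preimage hg)
    have hpW : (p : ∀ i, X i) ∈ W := by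
      change p ∈ Subtype.val ⁻¹' W
      rw [hWg]; rfl
    obtain ⟨I, u, hu, hIu⟩ := isOpen_pi_iff.1 hW p hpW
    refine ⟨I, fun q hq => ?_⟩
    have hqW : (q : ∀ i, X i) ∈ W := hIu fun i hi => (hq i hi : _ = _) ▸ (hu i hi).2
    change q ∈ g ⁻¹' {g p}
    rwa [← hWg]
  choose I hI using hlocal
  obtain ⟨t, ht⟩ := hP.elim_finite_subcover (fun p => box (I p) p)
    (fun p => isOpen_set_pi (I p).finite_toSet fun _ _ => isOpen_discrete _)
    fun x hx => mem_iUnion.2 ⟨⟨x, hx⟩, fun _ _ => rfl⟩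
  refine ⟨t.biUnion I, fun p q hpq => ?_⟩
  obtain ⟨p₀, hp₀, hp⟩ := mem_iUnion₂.1 (ht p.2)
  have hq : (q : ∀ i, X i) ∈ box (I p₀) p₀ := fun i hi =>
    (hpq i (Finset.mem_biUnion.2 ⟨p₀, hp₀, hi⟩)).symm.trans (hp i hi)
  rw [hI p₀ p hp, hI p₀ q hq]

theorem IsCompact.exists_continuous_extension [Nonempty Y] {P : Set (∀ i, X i)} (hP : IsCompact P)
    {g : P → Y} (hg : Continuous g) :
    ∃ G : (∀ i, X i) → Y, Continuous G ∧ ∀ p : P, G p = g p := by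
  classical
  obtain ⟨B, hB⟩ := hP.exists_finset_forall_eq_of_continuous hg
  let G' : (∀ i : B, X i) → Y := fun v =>
    if h : ∃ p : P, ∀ i : B, (p : ∀ i, X i) i = v i then g h.choose else Classical.arbitrary Y
  refine ⟨fun x => G' fun i => x i,
    (continuous_of_discreteTopology (f := G')).comp
      (continuous_pi fun i => continuous_apply (i : ι)),
    fun p => ?_⟩
  have h : ∃ q : P, ∀ i : B, (q : ∀ i, X i) i = (p : ∀ i, X i) i := ⟨p, fun _ => rfl⟩
  simp only [G', dif_pos h]
  exact hB _ _ fun i hi => h.choose_spec ⟨i, hi⟩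

theorem IsCompact.exists_continuous_extension_pi {κ : Type*} {Y : κ → Type*}
    [∀ j, TopologicalSpace (Y j)] [∀ j, DiscreteTopology (Y j)] [∀ j, Nonempty (Y j)]
    {P : Set (∀ i, X i)} (hP : IsCompact P) {g : P → ∀ j, Y j} (hg : Continuous g) :
    ∃ G : (∀ i, X i) → ∀ j, Y j, Continuous G ∧ ∀ p : P, G p = g p := by
  choose G hG hGg using fun j => hP.exists_continuous_extension ((continuous_apply j).comp hg)
  exact ⟨fun x j => G j x, continuous_pi hG, fun p => funext fun j => hGg j p⟩

end FiniteDetermination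

section GraphTrick

variable {X : Type*} [TopologicalSpace X] [AddGroup X] [IsTopologicalAddGroup X]

def Homeomorph.shearAdd (φ : X → X) (hφ : Continuous φ) : X × X ≃ₜ X × X where
  toFun z := (z.1, z.2 + φ z.1)
  invFun z := (z.1, z.2 - φ z.1)
  left_inv z := by simp
  right_inv z := by simp
  continuous_toFun := by fun_prop
  continuous_invFun := by fun_prop

theorem exists_homeomorph_prod_apply_zero {P K : Set X} (f : P ≃ₜ K) {φ ψ : X → X}
    (hφ : Continuous φ) (hψ : Continuous ψ) (hφf : ∀ p : P, φ p = f p)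
    (hψf : ∀ k : K, ψ k = f.symm k) :
    ∃ H : X × X ≃ₜ X × X, ∀ p : P, H ((p : X), 0) = ((f p : X), 0) := by
  refine ⟨(Homeomorph.shearAdd φ hφ).trans
    ((Homeomorph.prodComm X X).trans (Homeomorph.shearAdd ψ hψ).symm), fun p => ?_⟩
  change (0 + φ p, (p : X) - ψ (0 + φ p)) = _
  rw [zero_add, hφf, hψf, f.symm_apply_apply, sub_self]

theorem exists_homeomorph_extension_of_homeomorph_prod {P K : Set X} (f : P ≃ₜ K) {φ ψ : X → X}
    (hφ : Continuous φ) (hψ : Continuous ψ) (hφf : ∀ p : P, φ p = f p)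
    (hψf : ∀ k : K, ψ k = f.symm k) (e : X ≃ₜ X × X) (he : ∀ x ∈ P ∪ K, e x = (x, 0)) :
    ∃ F : X ≃ₜ X, ∀ p : P, F p = f p := by
  obtain ⟨H, hH⟩ := exists_homeomorph_prod_apply_zero f hφ hψ hφf hψf
  refine ⟨e.trans (H.trans e.symm), fun p => ?_⟩
  change e.symm (H (e p)) = f p
  rw [he p (Or.inl p.2), hH, ← he (f p) (Or.inr (f p).2), e.symm_apply_apply]

end GraphTrick

theorem Set.Finite.exists_equiv_prod_apply_eq {G : Type*} [Zero G] [Infinite G] {S : Set G}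
    (hS : S.Finite) : ∃ β : G ≃ G × G, ∀ s ∈ S, β s = (s, 0) := by
  have hGG : Nonempty (G ≃ G × G) := Cardinal.eq.1 <| by
    rw [Cardinal.mk_prod, Cardinal.lift_id, Cardinal.mul_eq_self (Cardinal.aleph0_le_mk G)]
  have hSG : Cardinal.mk S < Cardinal.mk G :=
    (Cardinal.lt_aleph0_iff_set_finite.2 hS).trans_le (Cardinal.aleph0_le_mk G)
  obtain ⟨β, hβ⟩ := Cardinal.extend_function_of_lt
    ⟨fun s => ((s : G), (0 : G)), fun s t h => Subtype.ext (Prod.ext_iff.1 h).1⟩ hSG hGG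
  exact ⟨β, fun s hs => hβ ⟨s, hs⟩⟩

theorem IsCompact.exists_homeomorph_pi_prod_apply_eq {A G : Type*} [TopologicalSpace G]
    [DiscreteTopology G] [Zero G] [Infinite G] {C : Set (A → G)} (hC : IsCompact C) :
    ∃ e : (A → G) ≃ₜ (A → G) × (A → G), ∀ c ∈ C, e c = (c, 0) := by
  have hfin a : ((fun x : A → G => x a) '' C).Finite :=
    isCompact_iff_finite.1 (hC.image (continuous_apply a))
  choose β hβ using fun a => (hfin a).exists_equiv_prod_apply_eq
  let split : (A → G × G) ≃ₜ (A → G) × (A → G) :=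
    { Equiv.arrowProdEquivProdArrow A (fun _ => G) (fun _ => G) with
      continuous_toFun := by fun_prop
      continuous_invFun := by fun_prop }
  refine ⟨(Homeomorph.piCongrRight fun a => (β a).toHomeomorphOfDiscrete).trans split,
    fun c hc => ?_⟩
  change split (fun a => β a (c a)) = _
  simp_rw [fun a => hβ a (c a) ⟨c, hc, rfl⟩]
  rfl

def ExtendsCompactHomeomorphs (X : Type*) [TopologicalSpace X] : Prop :=
  ∀ P K : Set X, IsCompact P → IsCompact K → ∀ f : P ≃ₜ K, ∃ F : X ≃ₜ X, ∀ p : P, F p = f p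

theorem ExtendsCompactHomeomorphs.of_homeomorph {X Y : Type*} [TopologicalSpace X]
    [TopologicalSpace Y] (e : X ≃ₜ Y) (hY : ExtendsCompactHomeomorphs Y) :
    ExtendsCompactHomeomorphs X := by
  intro P K hP hK f
  obtain ⟨F, hF⟩ := hY _ _ (hP.image e.continuous) (hK.image e.continuous)
    ((e.image P).symm.trans (f.trans (e.image K)))
  refine ⟨e.trans (F.trans e.symm), fun p => ?_⟩
  change e.symm (F (e p)) = f p
  rw [hF ⟨e p, mem_image_of_mem e p.2⟩]
  change e.symm (e (f ((e.image P).symm (e.image P p)))) = f p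
  rw [e.symm_apply_apply, Homeomorph.symm_apply_apply]

theorem extendsCompactHomeomorphs_pi {A G : Type*} [TopologicalSpace G] [DiscreteTopology G]
    [AddGroup G] [Infinite G] : ExtendsCompactHomeomorphs (A → G) := by
  intro P K hP hK f
  obtain ⟨φ, hφ, hφf⟩ := hP.exists_continuous_extension_pi
    (continuous_subtype_val.comp f.continuous)
  obtain ⟨ψ, hψ, hψf⟩ := hK.exists_continuous_extension_pi
    (continuous_subtype_val.comp f.symm.continuous)
  obtain ⟨e, he⟩ := (hP.union hK).exists_homeomorph_pi_prod_apply_eq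
  exact exists_homeomorph_extension_of_homeomorph_prod f hφ hψ hφf hψf e he

theorem stmt1_general (A : Type u)
    (P K : Set (A → ℕ)) (hP : IsCompact P) (hK : IsCompact K)
    (f : ↥P ≃ₜ ↥K) :
    ∃ F : (A → ℕ) ≃ₜ (A → ℕ), ∀ p : P, F (p : A → ℕ) = (f p : A → ℕ) :=
  (extendsCompactHomeomorphs_pi (G := ℤ)).of_homeomorph
    (Homeomorph.piCongrRight fun _ => (Denumerable.eqv ℤ).symm.toHomeomorphOfDiscrete) P K hP hK f

/-- **Corollary 1.2**: for `τ ≥ ℵ₀` (the index set `A` is infinite), every homeomorphism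
between two compact subsets `P` and `K` of `ℕ^τ` can be extended to a homeomorphism of
`ℕ^τ` onto itself. -/
theorem stmt1 (A : Type u) [Infinite A]
    (P K : Set (A → ℕ)) (hP : IsCompact P) (hK : IsCompact K)
    (f : ↥P ≃ₜ ↥K) :
    ∃ F : (A → ℕ) ≃ₜ (A → ℕ), ∀ p : P, F (p : A → ℕ) = (f p : A → ℕ) :=
  stmt1_general A P K hP hK f
end

section
/- Let Y be a 0-dimensional Tychonoff space, A an uncountable index set, P and K compact subsets of Y × ℕ^A, and f : P → K a homeomorphism with π₁|P = π₁ ∘ f, where π₁ : Y × ℕ^A → Y is the projection. Then for every α ∈ A there is a countable f-admissible set B(α) ⊆ A containing α. -/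
open Topology Set

/-- The natural projection `p_B : Y × ℕ^A → Y × ℕ^B` for `B ⊆ A`. -/
def projTo {Y : Type u} {A : Type v} (B : Set A) (z : Y × (A → ℕ)) : Y × (B → ℕ) :=
  (z.1, fun b => z.2 b)

/-- A set `B ⊆ A` is *`f`-admissible* if there is a homeomorphism
`f_B : P_B → K_B` (where `P_B = p_B(P)`, `K_B = p_B(K)`) such that
`(f_B ∘ p_B)|P = p_B ∘ f` and `_Bπ₁|P_B = _Bπ₁ ∘ f_B`. -/
def FAdmissible {Y : Type u} {A : Type v} [TopologicalSpace Y]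
    (P K : Set (Y × (A → ℕ))) (f : ↥P ≃ₜ ↥K) (B : Set A) : Prop :=
  ∃ fB : ↥(projTo B '' P) ≃ₜ ↥(projTo B '' K),
    (∀ p : P, (fB ⟨projTo B (p : Y × (A → ℕ)), mem_image_of_mem _ p.2⟩ : Y × (B → ℕ))
        = projTo B (f p : Y × (A → ℕ))) ∧
    (∀ q : ↥(projTo B '' P), ((fB q : Y × (B → ℕ)).1 = (q : Y × (B → ℕ)).1))

/-! Each coordinate of `f` and of `f⁻¹` is a continuous `ℕ`-valued map on a compact set. Since
`Y` is Hausdorff, the closed sets `{(x, y) | p_B x = p_B y}`, `B` finite, form a directed family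
with the diagonal as intersection, so by compactness such a map factors through `p_B` for a finite
`B`. Closing `{α}` under these finite supports gives a countable `B` for which `f` and `f⁻¹`
respect the fibres of `p_B`; as `p_B` is a quotient map on the compact sets `P` and `K`, `f`
descends to the homeomorphism `f_B`. -/

theorem Set.exists_countable_forall_subset {A : Type*} (F : A → Set A)
    (hF : ∀ a, (F a).Countable) (x : A) :
    ∃ B : Set A, B.Countable ∧ x ∈ B ∧ ∀ a ∈ B, F a ⊆ B := by
  let step : Set A → Set A := fun S => S ∪ ⋃ a ∈ S, F a
  have hstep : ∀ n, (step^[n] {x}).Countable := by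
    intro n
    induction n with
    | zero => exact countable_singleton x
    | succ n ih =>
      rw [Function.iterate_succ_apply']
      exact ih.union (ih.biUnion fun a _ => hF a)
  refine ⟨⋃ n, step^[n] {x}, countable_iUnion hstep, mem_iUnion.mpr ⟨0, rfl⟩, ?_⟩
  intro a ha b hb
  obtain ⟨n, hn⟩ := mem_iUnion.mp ha
  refine mem_iUnion.mpr ⟨n + 1, ?_⟩
  rw [Function.iterate_succ_apply']
  exact Or.inr (mem_biUnion hn hb)

theorem Homeomorph.exists_homeomorph_comp_eq_comp {X X' Z Z' : Type*} [TopologicalSpace X]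
    [TopologicalSpace X'] [TopologicalSpace Z] [TopologicalSpace Z'] (f : X ≃ₜ X')
    {π : X → Z} {π' : X' → Z'} (hπ : IsQuotientMap π) (hπ' : IsQuotientMap π')
    (hf : Function.FactorsThrough (π' ∘ f) π) (hf' : Function.FactorsThrough (π ∘ f.symm) π') :
    ∃ g : Z ≃ₜ Z', g ∘ π = π' ∘ f := by
  let πc : C(X, Z) := ⟨π, hπ.continuous⟩
  let πc' : C(X', Z') := ⟨π', hπ'.continuous⟩
  let φ : C(X, Z') := πc'.comp f
  let φ' : C(X', Z) := πc.comp f.symm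
  let g := IsQuotientMap.lift (f := πc) hπ φ hf
  let g' := IsQuotientMap.lift (f := πc') hπ' φ' hf'
  have hg : ∀ x, g (π x) = π' (f x) :=
    DFunLike.congr_fun (IsQuotientMap.lift_comp (f := πc) hπ φ hf)
  have hg' : ∀ x', g' (π' x') = π (f.symm x') :=
    DFunLike.congr_fun (IsQuotientMap.lift_comp (f := πc') hπ' φ' hf')
  refine ⟨⟨⟨g, g', ?_, ?_⟩, g.continuous, g'.continuous⟩, funext hg⟩
  · intro z
    obtain ⟨x, rfl⟩ := hπ.surjective z
    simp [hg, hg']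
  · intro z'
    obtain ⟨x', rfl⟩ := hπ'.surjective z'
    simp [hg, hg']

theorem IsCompact.isQuotientMap_imageFactorization {α β : Type*} [TopologicalSpace α]
    [TopologicalSpace β] [T2Space β] {s : Set α} (hs : IsCompact s) {f : α → β}
    (hf : Continuous f) : IsQuotientMap (s.imageFactorization f) :=
  haveI := isCompact_iff_compactSpace.mp hs
  .of_surjective_continuous imageFactorization_surjective
    ((hf.comp continuous_subtype_val).subtype_mk _)

section projTo

variable {Y : Type*} {A : Type*}

theorem projTo_eq_iff {B : Set A} {x y : Y × (A → ℕ)} :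
    projTo B x = projTo B y ↔ x.1 = y.1 ∧ ∀ a ∈ B, x.2 a = y.2 a := by
  simp [projTo, Prod.ext_iff, funext_iff, Subtype.forall]

theorem projTo_eq_of_subset {B C : Set A} (hBC : B ⊆ C) {x y : Y × (A → ℕ)}
    (h : projTo C x = projTo C y) : projTo B x = projTo B y := by
  rw [projTo_eq_iff] at h ⊢
  exact ⟨h.1, fun a ha => h.2 a (hBC ha)⟩

theorem factorsThrough_projTo_of_forall_coord {P : Set (Y × (A → ℕ))} (g : P → Y × (A → ℕ))
    (hg : ∀ p, (g p).1 = (p : Y × (A → ℕ)).1) (F : A → Set A)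
    (hF : ∀ a, Function.FactorsThrough (fun p => (g p).2 a) (fun p : P => projTo (F a) p.1))
    {B : Set A} (hB : ∀ a ∈ B, F a ⊆ B) :
    Function.FactorsThrough (fun p => projTo B (g p)) (fun p : P => projTo B p.1) := by
  intro x y hxy
  refine projTo_eq_iff.mpr ⟨by rw [hg, hg, (projTo_eq_iff.mp hxy).1], fun a ha => ?_⟩
  exact hF a (projTo_eq_of_subset (hB a ha) hxy)

variable [TopologicalSpace Y]

theorem continuous_projTo (B : Set A) : Continuous (projTo (Y := Y) B) :=
  continuous_fst.prodMk (continuous_pi fun b => (continuous_apply (b : A)).comp continuous_snd)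

theorem exists_finite_projTo_ne [T2Space Y] {s : Set ((Y × (A → ℕ)) × (Y × (A → ℕ)))}
    (hs : IsCompact s) (hdiag : ∀ p ∈ s, p.1 ≠ p.2) :
    ∃ B : Set A, B.Finite ∧ ∀ p ∈ s, projTo B p.1 ≠ projTo B p.2 := by
  classical
  let t : Finset A → Set ((Y × (A → ℕ)) × (Y × (A → ℕ))) :=
    fun B => {p | projTo (B : Set A) p.1 = projTo (B : Set A) p.2}
  have ht : ∀ B, IsClosed (t B) := fun B =>
    isClosed_eq ((continuous_projTo _).comp continuous_fst)
      ((continuous_projTo _).comp continuous_snd)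
  have hdir : Directed (· ⊇ ·) t := fun B C =>
    ⟨B ∪ C, fun _ hp => projTo_eq_of_subset (by simp) hp,
      fun _ hp => projTo_eq_of_subset (by simp) hp⟩
  have hempty : s ∩ ⋂ B, t B = ∅ := by
    refine eq_empty_of_forall_notMem fun p ⟨hp, hpt⟩ => hdiag p hp ?_
    have hcoord : ∀ B : Finset A, p.1.1 = p.2.1 ∧ ∀ a ∈ B, p.1.2 a = p.2.2 a := fun B =>
      projTo_eq_iff.mp (mem_iInter.mp hpt B)
    exact Prod.ext (hcoord ∅).1 (funext fun a => (hcoord {a}).2 a (Finset.mem_singleton_self a))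
  obtain ⟨B, hB⟩ := hs.elim_directed_family_closed t ht hempty hdir
  exact ⟨B, B.finite_toSet, fun p hp hpB => (eq_empty_iff_forall_notMem.mp hB) p ⟨hp, hpB⟩⟩

theorem exists_finite_factorsThrough_projTo [T2Space Y] {X : Type*} [TopologicalSpace X]
    [DiscreteTopology X] {P : Set (Y × (A → ℕ))} (hP : IsCompact P) {g : P → X}
    (hg : Continuous g) :
    ∃ B : Set A, B.Finite ∧
      Function.FactorsThrough g (fun p : P => projTo B (p : Y × (A → ℕ))) := by
  have := isCompact_iff_compactSpace.mp hP
  let s : Set (P × P) := {q | g q.1 ≠ g q.2}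
  have hs : IsCompact (Prod.map Subtype.val Subtype.val '' s) :=
    ((isClosed_discrete {q : X × X | q.1 ≠ q.2}).preimage (hg.prodMap hg)).isCompact.image
      (continuous_subtype_val.prodMap continuous_subtype_val)
  obtain ⟨B, hBfin, hB⟩ := exists_finite_projTo_ne hs (by
    rintro _ ⟨q, hq, rfl⟩ h
    exact hq (congrArg g (Subtype.ext h)))
  refine ⟨B, hBfin, fun x y hxy => ?_⟩
  by_contra hne
  exact hB _ ⟨(x, y), hne, rfl⟩ hxy

end projTo

theorem stmt3_general {Y : Type u} [TopologicalSpace Y] [T35Space Y]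
    {A : Type v}
    (P K : Set (Y × (A → ℕ))) (hP : IsCompact P) (hK : IsCompact K)
    (f : ↥P ≃ₜ ↥K) (hf : ∀ p : P, ((f p : Y × (A → ℕ)).1 = (p : Y × (A → ℕ)).1))
    (α : A) :
    ∃ B : Set A, B.Countable ∧ α ∈ B ∧ FAdmissible P K f B := by
  have hf_symm : ∀ q : K, ((f.symm q : Y × (A → ℕ)).1 = (q : Y × (A → ℕ)).1) := fun q => by
    simpa using (hf (f.symm q)).symm
  have hcoord : ∀ a : A, Continuous fun z : Y × (A → ℕ) => z.2 a := fun a =>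
    (continuous_apply a).comp continuous_snd
  choose F hFfin hF using fun a => exists_finite_factorsThrough_projTo hP
    ((hcoord a).comp (continuous_subtype_val.comp f.continuous))
  choose G hGfin hG using fun a => exists_finite_factorsThrough_projTo hK
    ((hcoord a).comp (continuous_subtype_val.comp f.symm.continuous))
  obtain ⟨B, hBc, hαB, hBF⟩ := exists_countable_forall_subset (fun a => F a ∪ G a)
    (fun a => ((hFfin a).union (hGfin a)).countable) α
  have hf_fibres := factorsThrough_projTo_of_forall_coord _ hf F hF fun a ha =>
    (hBF a ha).trans' subset_union_left
  have hf_symm_fibres := factorsThrough_projTo_of_forall_coord _ hf_symm G hG fun a ha =>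
    (hBF a ha).trans' subset_union_right
  obtain ⟨fB, hfB⟩ := f.exists_homeomorph_comp_eq_comp
    (hP.isQuotientMap_imageFactorization (continuous_projTo B))
    (hK.isQuotientMap_imageFactorization (continuous_projTo B))
    (fun _ _ h => Subtype.ext (hf_fibres (congrArg Subtype.val h)))
    (fun _ _ h => Subtype.ext (hf_symm_fibres (congrArg Subtype.val h)))
  refine ⟨B, hBc, hαB, fB, fun p => congrArg Subtype.val (congrFun hfB p), ?_⟩
  rintro ⟨_, p, hp, rfl⟩
  exact (congrArg (fun z => (Subtype.val z).1) (congrFun hfB ⟨p, hp⟩)).trans (hf ⟨p, hp⟩)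

/-- **Lemma 2.2**: if `Y` is a 0-dimensional Tychonoff space, `A` is uncountable,
`P`, `K` are compact subsets of `Y × ℕ^A` and `f : P → K` is a homeomorphism with
`π₁|P = π₁ ∘ f`, then every `α ∈ A` belongs to some countable `f`-admissible set
`B(α) ⊆ A`. -/
theorem stmt3 {Y : Type u} [TopologicalSpace Y] [T35Space Y] (hY : ZeroDimensional Y)
    {A : Type v} [Uncountable A]
    (P K : Set (Y × (A → ℕ))) (hP : IsCompact P) (hK : IsCompact K)
    (f : ↥P ≃ₜ ↥K) (hf : ∀ p : P, ((f p : Y × (A → ℕ)).1 = (p : Y × (A → ℕ)).1))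
    (α : A) :
    ∃ B : Set A, B.Countable ∧ α ∈ B ∧ FAdmissible P K f B :=
  stmt3_general P K hP hK f hf α
end

section
/- Let Y be a Tychonoff space, A an index set, P a compact subset of Y × ℕ^A, and h : P → ℕ^A a continuous map. Then for every countable set C ⊆ A, there is a countable set D ⊆ A containing C and a continuous map g : p_D(P) → ℕ^C such that (g ∘ p_D)|P = π_C ∘ h, where p_D : Y × ℕ^A → Y × ℕ^D and π_C : ℕ^A → ℕ^C denote the natural projections. -/
open Topology Set

theorem projTo_continuous {Y : Type u} [TopologicalSpace Y] {A : Type v} (B : Set A) :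
    Continuous (projTo (Y := Y) B) :=
  continuous_fst.prodMk <| continuous_pi fun b => (continuous_apply (b : A)).comp continuous_snd

/-- **Claim 2.3**: let `Y` be a Tychonoff space, `A` an index set, `P` a compact subset of
`Y × ℕ^A` and `h : P → ℕ^A` a continuous map.  Then for every countable `C ⊆ A` there exist
a countable `D ⊆ A` containing `C` and a continuous map `g : p_D(P) → ℕ^C` with
`(g ∘ p_D)|P = π_C ∘ h`. -/
theorem stmt4 {Y : Type u} [TopologicalSpace Y] [T35Space Y] {A : Type v}
    (P : Set (Y × (A → ℕ))) (hP : IsCompact P)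
    (h : ↥P → (A → ℕ)) (hh : Continuous h)
    (C : Set A) (hC : C.Countable) :
    ∃ D : Set A, D.Countable ∧ C ⊆ D ∧
      ∃ g : ↥(projTo D '' P) → (C → ℕ), Continuous g ∧
        ∀ p : P, g ⟨projTo D (p : Y × (A → ℕ)), mem_image_of_mem _ p.2⟩
          = fun c : C => h p c := by
  classical
  haveI : CompactSpace ↥P := isCompact_iff_compactSpace.mp hP
  haveI := hC.to_subtype
  set U : A → Set (↥P × ↥P) :=
    fun a => {q | (q.1 : Y × (A → ℕ)).2 a ≠ (q.2 : Y × (A → ℕ)).2 a} with hU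
  have hUopen : ∀ a, IsOpen (U a) := by
    intro a
    have hc : Continuous fun q : ↥P × ↥P =>
        ((q.1 : Y × (A → ℕ)).2 a, (q.2 : Y × (A → ℕ)).2 a) :=
      (((continuous_apply a).comp (continuous_snd.comp
        (continuous_subtype_val.comp continuous_fst)))).prodMk
        (((continuous_apply a).comp (continuous_snd.comp
        (continuous_subtype_val.comp continuous_snd))))
    exact (isOpen_discrete {p : ℕ × ℕ | p.1 ≠ p.2}).preimage hc
  have hKc : ∀ c : C, ∃ t : Finset A,
      {q : ↥P × ↥P | (q.1 : Y × (A → ℕ)).1 = (q.2 : Y × (A → ℕ)).1 ∧ h q.1 c ≠ h q.2 c}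
        ⊆ ⋃ a ∈ t, U a := by
    intro c
    set K : Set (↥P × ↥P) :=
      {q | (q.1 : Y × (A → ℕ)).1 = (q.2 : Y × (A → ℕ)).1 ∧ h q.1 c ≠ h q.2 c} with hK
    have hc1 : Continuous fun q : ↥P × ↥P => (q.1 : Y × (A → ℕ)).1 :=
      continuous_fst.comp (continuous_subtype_val.comp continuous_fst)
    have hc2 : Continuous fun q : ↥P × ↥P => (q.2 : Y × (A → ℕ)).1 :=
      continuous_fst.comp (continuous_subtype_val.comp continuous_snd)
    have hch : Continuous fun q : ↥P × ↥P => (h q.1 (c : A), h q.2 (c : A)) :=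
      (((continuous_apply (c : A)).comp (hh.comp continuous_fst))).prodMk
        (((continuous_apply (c : A)).comp (hh.comp continuous_snd)))
    have hclosed : IsClosed K :=
      (isClosed_eq hc1 hc2).inter
        ((isClosed_discrete {p : ℕ × ℕ | p.1 ≠ p.2}).preimage hch)
    have hcomp : IsCompact K := hclosed.isCompact
    have hcover : K ⊆ ⋃ a, U a := by
      rintro ⟨x, y⟩ ⟨h1, h2⟩
      have hxy : x ≠ y := fun e => h2 (by rw [e])
      have hxy' : (x : Y × (A → ℕ)) ≠ (y : Y × (A → ℕ)) := fun e => hxy (Subtype.ext e)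
      have h2' : (x : Y × (A → ℕ)).2 ≠ (y : Y × (A → ℕ)).2 := fun e =>
        hxy' (Prod.ext h1 e)
      obtain ⟨a, ha⟩ := Function.ne_iff.mp h2'
      exact mem_iUnion.mpr ⟨a, ha⟩
    exact hcomp.elim_finite_subcover U hUopen hcover
  choose t ht using hKc
  set D : Set A := C ∪ ⋃ c : C, (t c : Set A) with hD
  have hDcount : D.Countable :=
    hC.union (countable_iUnion fun c => (t c).countable_toSet)
  have key : ∀ x y : ↥P, projTo D (x : Y × (A → ℕ)) = projTo D (y : Y × (A → ℕ)) →
      ∀ c : C, h x c = h y c := by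
    intro x y hxy c
    by_contra hne
    have h1 : (x : Y × (A → ℕ)).1 = (y : Y × (A → ℕ)).1 := congrArg (fun z : Y × (↥D → ℕ) => z.1) hxy
    have hmem : (x, y) ∈ {q : ↥P × ↥P |
        (q.1 : Y × (A → ℕ)).1 = (q.2 : Y × (A → ℕ)).1 ∧ h q.1 c ≠ h q.2 c} := ⟨h1, hne⟩
    obtain ⟨a, haT, haU⟩ := mem_iUnion₂.mp (ht c hmem)
    have haD : a ∈ D := Or.inr (mem_iUnion.mpr ⟨c, haT⟩)
    have := congrFun (congrArg (fun z : Y × (↥D → ℕ) => z.2) hxy) ⟨a, haD⟩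
    exact haU this
  refine ⟨D, hDcount, subset_union_left, ?_⟩
  set π : ↥P → ↥(projTo D '' P) :=
    fun p => ⟨projTo D (p : Y × (A → ℕ)), mem_image_of_mem _ p.2⟩ with hπ
  have hπcont : Continuous π :=
    Continuous.subtype_mk ((projTo_continuous D).comp continuous_subtype_val) _
  have hπsurj : Function.Surjective π := by
    rintro ⟨z, hz⟩
    obtain ⟨x, hxP, hxz⟩ := hz
    exact ⟨⟨x, hxP⟩, Subtype.ext hxz⟩
  have hπq : IsQuotientMap π := (hπcont.isClosedMap).isQuotientMap hπcont hπsurj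
  set g : ↥(projTo D '' P) → (C → ℕ) :=
    fun z c => h ⟨z.2.choose, z.2.choose_spec.1⟩ c with hg
  have hgπ : ∀ p : ↥P, g (π p) = fun c : C => h p c := by
    intro p
    funext c
    exact key _ p ((π p).2.choose_spec.2) c
  refine ⟨g, ?_, fun p => hgπ p⟩
  rw [hπq.continuous_iff]
  have : (g ∘ π) = fun p : ↥P => fun c : C => h p c := funext hgπ
  rw [this]
  exact continuous_pi fun c => (continuous_apply (c : A)).comp hh
end

section
/- Let P and K be compact subsets of ℕ^ℕ. Then every homeomorphism f : P → K can be extended to a homeomorphism of ℕ^ℕ onto itself. -/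
/-!
The complement of a compact set `P ⊆ ℕ^ℕ` is the disjoint union of the cylinders `[s⌢k]` where
`s` is a prefix of a point of `P` and `s⌢k` is not (the *exits* of `P`). As `P` is finitely
branching, every prefix of `P` carries infinitely many exits. Call prefixes `s` of `P` and `t` of
`K` of the same length matched when `f` maps a point of `[s]` into `[t]`; every prefix has a
partner, so a counting argument gives a bijection `β` between the exits of `P` and of `K` along
matched prefixes. The extension is `f` on `P`, and on the cylinder of an exit `e` it overwrites
the prefix `e` by `β e`. The exits meeting a small cylinder around `x ∈ P` extend long prefixes
of `x`, so by continuity of `f` their partners extend long prefixes of `f x`; this gives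
continuity at `x`, and the inverse is the same construction for `f⁻¹` and `β⁻¹`.
-/

open Topology Set Function PiNat Filter

theorem exists_equiv_prod_nat_of_infinite_fibers {α E A : Type*} [Countable α] [Countable E]
    (p : α → A) (g : E → A) (hp : ∀ a, Infinite {x // p x = a})
    (hg : ∀ a, Nonempty {c // g c = a}) :
    ∃ φ : α ≃ E × ℕ, ∀ x, g (φ x).1 = p x := by
  have fiberEquiv (a : A) : {x // p x = a} ≃ {c // g c = a} × ℕ :=
    have := (nonempty_denumerable {x // p x = a}).some
    have := (nonempty_denumerable ({c // g c = a} × ℕ)).some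
    Denumerable.equiv₂ _ _
  let φ : α ≃ E × ℕ :=
    (Equiv.sigmaFiberEquiv p).symm.trans <| (Equiv.sigmaCongrRight fiberEquiv).trans <|
      (Equiv.sigmaProdDistrib _ _).symm.trans <| (Equiv.sigmaFiberEquiv g).prodCongr (.refl ℕ)
  exact ⟨φ, fun x => (fiberEquiv (p x) ⟨x, rfl⟩).1.2⟩

theorem exists_equiv_forall_rel_of_infinite_fibers {α γ A B : Type*} [Countable α] [Countable γ]
    (p : α → A) (q : γ → B) (hp : ∀ a, Infinite {x // p x = a})
    (hq : ∀ b, Infinite {y // q y = b}) (R : A → B → Prop) (hR : ∀ a, ∃ b, R a b)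
    (hR' : ∀ b, ∃ a, R a b) : ∃ e : α ≃ γ, ∀ x, R (p x) (q (e x)) := by
  have : Countable A := Surjective.countable (f := p) fun a =>
    let ⟨x, hx⟩ := (hp a).nonempty.some; ⟨x, hx⟩
  have : Countable B := Surjective.countable (f := q) fun b =>
    let ⟨y, hy⟩ := (hq b).nonempty.some; ⟨y, hy⟩
  let E := {ab : A × B // R ab.1 ab.2}
  obtain ⟨φ, hφ⟩ := exists_equiv_prod_nat_of_infinite_fibers p (fun c : E => c.1.1) hp
    fun a => let ⟨b, h⟩ := hR a; ⟨⟨⟨(a, b), h⟩, rfl⟩⟩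
  obtain ⟨ψ, hψ⟩ := exists_equiv_prod_nat_of_infinite_fibers q (fun c : E => c.1.2) hq
    fun b => let ⟨a, h⟩ := hR' b; ⟨⟨⟨(a, b), h⟩, rfl⟩⟩
  refine ⟨φ.trans ψ.symm, fun x => ?_⟩
  rw [← hφ, ← hψ, Equiv.trans_apply, Equiv.apply_symm_apply]
  exact (φ x).1.2

namespace PiNat

variable {α : Type*}

theorem res_eq_res_of_le {x y : ℕ → α} {m n : ℕ} (h : res x n = res y n) (hmn : m ≤ n) :
    res x m = res y m :=
  res_eq_res.2 fun _ hi => res_eq_res.1 h (hi.trans_le hmn)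

theorem tail_res (x : ℕ → α) (n : ℕ) : (res x n).tail = res x (n - 1) := by
  cases n <;> rfl

theorem eq_of_res_eq_of_forall_le {x y : ℕ → α} {n : ℕ} (h : res x n = res y n)
    (h' : ∀ i, n ≤ i → x i = y i) : x = y := by
  funext i
  rcases lt_or_ge i n with hi | hi
  · exact res_eq_res.1 h hi
  · exact h' i hi

theorem nhds_basis_res [TopologicalSpace α] [DiscreteTopology α] (x : ℕ → α) :
    (𝓝 x).HasBasis (fun _ => True) fun n => {y | res y n = res x n} := by
  refine ⟨fun s => ⟨fun hs => ?_, fun ⟨n, _, hn⟩ => mem_of_superset ?_ hn⟩⟩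
  · obtain ⟨_, ⟨y, n, rfl⟩, hx, hs⟩ := (isTopologicalBasis_cylinders fun _ => α).mem_nhds_iff.1 hs
    rw [cylinder_eq_res] at hx hs
    exact ⟨n, trivial, fun z hz => hs (hz.trans hx)⟩
  · rw [← cylinder_eq_res]
    exact (isOpen_cylinder _ _ _).mem_nhds (self_mem_cylinder x n)

/-- `graft s z` overwrites the first `s.length` values of `z` by `s`, read in the order of `res`. -/
def graft : List α → (ℕ → α) → ℕ → α
  | [], z => z
  | a :: s, z => update (graft s z) s.length a

theorem graft_apply_of_le : ∀ {s : List α} {z : ℕ → α} {i : ℕ}, s.length ≤ i → graft s z i = z i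
  | [], _, _, _ => rfl
  | a :: s, z, i, (hi : s.length < i) => by
    rw [graft, update_of_ne hi.ne', graft_apply_of_le hi.le]

theorem res_graft : ∀ (s : List α) (z : ℕ → α), res (graft s z) s.length = s
  | [], _ => rfl
  | a :: s, z => by
    rw [List.length_cons, res_succ, graft, update_self]
    exact congrArg _ ((res_eq_res.2 fun i hi => update_of_ne hi.ne _ _).trans (res_graft s z))

theorem continuous_graft [TopologicalSpace α] : ∀ s : List α, Continuous (graft s)
  | [] => continuous_id
  | _ :: s => (continuous_graft s).update _ continuous_const

theorem graft_res (z : ℕ → α) (n : ℕ) : graft (res z n) z = z := by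
  refine eq_of_res_eq_of_forall_le (n := n) ?_ fun i hi => graft_apply_of_le (by simpa using hi)
  simpa using res_graft (res z n) z

theorem graft_graft {s s' : List α} (h : s.length = s'.length) (z : ℕ → α) :
    graft s (graft s' z) = graft s z := by
  refine eq_of_res_eq_of_forall_le (n := s.length) ?_ fun i hi => ?_
  · rw [res_graft, res_graft]
  · rw [graft_apply_of_le hi, graft_apply_of_le hi, graft_apply_of_le (h ▸ hi)]

end PiNat

namespace KnasterReichbach

variable {P K : Set (ℕ → ℕ)} {z : ℕ → ℕ} {e : List ℕ} {m n : ℕ}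

-- Finite sequences are the lists `PiNat.res x n`, which list `x (n - 1), …, x 0`.
def prefixes (P : Set (ℕ → ℕ)) : Set (List ℕ) := {s | ∃ x ∈ P, res x s.length = s}

def exits (P : Set (ℕ → ℕ)) : Set (List ℕ) := {s | s ∉ prefixes P ∧ s.tail ∈ prefixes P}

theorem res_mem_prefixes_iff : res z n ∈ prefixes P ↔ ∃ x ∈ P, res x n = res z n := by
  simp only [prefixes, mem_ofPred_eq, res_length]

theorem res_mem_prefixes (hz : z ∈ P) (n : ℕ) : res z n ∈ prefixes P :=
  res_mem_prefixes_iff.2 ⟨z, hz, rfl⟩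

theorem res_mem_prefixes_of_le (h : res z n ∈ prefixes P) (hmn : m ≤ n) : res z m ∈ prefixes P :=
  let ⟨x, hx, hxz⟩ := res_mem_prefixes_iff.1 h
  res_mem_prefixes_iff.2 ⟨x, hx, res_eq_res_of_le hxz hmn⟩

theorem exists_res_notMem_prefixes (hP : IsClosed P) (hz : z ∉ P) :
    ∃ n, res z n ∉ prefixes P := by
  obtain ⟨n, -, hn⟩ := (nhds_basis_res z).mem_iff.1 (hP.isOpen_compl.mem_nhds hz)
  refine ⟨n, fun h => ?_⟩
  obtain ⟨x, hx, hxz⟩ := res_mem_prefixes_iff.1 h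
  exact hn hxz hx

theorem infinite_setOf_cons_notMem_prefixes (hP : IsCompact P) (t : List ℕ) :
    {k | k :: t ∉ prefixes P}.Infinite := by
  refine ((hP.image (continuous_apply t.length)).finite_of_discrete.subset ?_).infinite_compl
  rintro k ⟨x, hx, hxt⟩
  rw [List.length_cons, res_succ, List.cons.injEq] at hxt
  exact ⟨x, hx, hxt.1⟩

theorem ne_nil_of_mem_exits (he : e ∈ exits P) : e ≠ [] :=
  fun h => he.1 (h ▸ he.2)

theorem notMem_of_res_eq_mem_exits (he : e ∈ exits P) (hz : res z e.length = e) : z ∉ P :=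
  fun hzP => he.1 (hz ▸ res_mem_prefixes hzP _)

theorem lt_length_of_res_eq_mem_exits (he : e ∈ exits P) (hz : res z e.length = e)
    (hn : res z n ∈ prefixes P) : n < e.length := by
  by_contra! h
  exact he.1 (hz ▸ res_mem_prefixes_of_le hn h)

theorem eq_of_res_eq_mem_exits {e' : List ℕ} (he : e ∈ exits P) (he' : e' ∈ exits P)
    (hz : res z e.length = e) (hz' : res z e'.length = e') : e = e' := by
  wlog hle : e.length ≤ e'.length generalizing e e'
  · exact (this he' he hz' hz (le_of_not_ge hle)).symm
  have htail : res z (e'.length - 1) ∈ prefixes P := by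
    rw [← tail_res, hz']
    exact he'.2
  have hlen : e.length = e'.length :=
    le_antisymm hle (Nat.le_of_pred_lt (lt_length_of_res_eq_mem_exits he hz htail))
  rw [← hz, ← hz', hlen]

theorem exists_exits_res_eq (hP : IsClosed P) (hne : P.Nonempty) (hz : z ∉ P) :
    ∃ e : exits P, res z e.1.length = e := by
  classical
  have h := exists_res_notMem_prefixes hP hz
  have hpos : Nat.find h ≠ 0 := fun h0 =>
    let ⟨x, hx⟩ := hne
    (h0 ▸ Nat.find_spec h) (res_mem_prefixes hx 0)
  refine ⟨⟨res z (Nat.find h), Nat.find_spec h, ?_⟩, by rw [res_length]⟩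
  rw [tail_res]
  exact not_not.1 (Nat.find_min h (by omega))

def exitPrefix (e : exits P) : prefixes P := ⟨e.1.tail, e.2.2⟩

theorem infinite_exitPrefix_fiber (hP : IsCompact P) (t : prefixes P) :
    Infinite {e : exits P // exitPrefix e = t} := by
  have := (infinite_setOf_cons_notMem_prefixes hP t.1).to_subtype
  refine Infinite.of_injective (fun k : {k | k :: t.1 ∉ prefixes P} => ⟨⟨k :: t.1, k.2, t.2⟩, rfl⟩)
    fun k k' h => ?_
  simpa [Subtype.ext_iff] using h

def Matched (f : P → K) (t t' : List ℕ) : Prop :=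
  ∃ x : P, res (x : ℕ → ℕ) t.length = t ∧ res (f x : ℕ → ℕ) t.length = t'

theorem Matched.length_eq {f : P → K} {t t' : List ℕ} (h : Matched f t t') :
    t'.length = t.length := by
  obtain ⟨x, -, hx⟩ := h
  rw [← hx, res_length]

theorem Matched.symm {f : P ≃ K} {t t' : List ℕ} (h : Matched f t t') : Matched f.symm t' t := by
  have hlen := h.length_eq
  obtain ⟨x, hxt, hxt'⟩ := h
  refine ⟨f x, ?_, ?_⟩ <;> rw [hlen]
  · exact hxt'
  · rwa [Equiv.symm_apply_apply]

theorem Matched.length_eq_of_mem_exits {f : P → K} {e : exits P} {e' : exits K}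
    (h : Matched f e.1.tail e'.1.tail) : e'.1.length = e.1.length := by
  have h1 := List.length_pos_of_ne_nil (ne_nil_of_mem_exits e.2)
  have h2 := List.length_pos_of_ne_nil (ne_nil_of_mem_exits e'.2)
  have := h.length_eq
  rw [List.length_tail, List.length_tail] at this
  omega

theorem exists_exits_equiv_matched (hP : IsCompact P) (hK : IsCompact K) (f : P ≃ K) :
    ∃ β : exits P ≃ exits K, ∀ e, Matched f e.1.tail (β e).1.tail := by
  refine exists_equiv_forall_rel_of_infinite_fibers exitPrefix exitPrefix
    (infinite_exitPrefix_fiber hP) (infinite_exitPrefix_fiber hK) (fun t t' => Matched f t t') ?_ ?_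
  · rintro ⟨t, x, hx, hxt⟩
    exact ⟨⟨_, res_mem_prefixes (f ⟨x, hx⟩).2 t.length⟩, ⟨x, hx⟩, hxt, rfl⟩
  · rintro ⟨t', y, hy, hyt⟩
    refine ⟨⟨_, res_mem_prefixes (f.symm ⟨y, hy⟩).2 t'.length⟩, ?_⟩
    simpa using (show Matched f.symm t' _ from ⟨⟨y, hy⟩, hyt, rfl⟩).symm

open Classical in
/-- The last branch is never taken when `P` is closed and nonempty. -/
noncomputable def extend (f : P → K) (β : exits P → exits K) (z : ℕ → ℕ) : ℕ → ℕ :=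
  if hz : z ∈ P then f ⟨z, hz⟩
  else if h : ∃ e : exits P, res z e.1.length = e then graft (β h.choose) z else z

theorem extend_of_mem (f : P → K) (β : exits P → exits K) (hz : z ∈ P) :
    extend f β z = f ⟨z, hz⟩ :=
  dif_pos hz

theorem extend_of_res_eq (f : P → K) (β : exits P → exits K) (e : exits P)
    (hz : res z e.1.length = e) : extend f β z = graft (β e) z := by
  have h : ∃ e : exits P, res z e.1.length = e := ⟨e, hz⟩
  rw [extend, dif_neg (notMem_of_res_eq_mem_exits e.2 hz), dif_pos h,
    Subtype.ext (eq_of_res_eq_mem_exits h.choose.2 e.2 h.choose_spec hz)]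

theorem extend_leftInverse (hP : IsClosed P) (hne : P.Nonempty) {f : P → K} {g : K → P}
    (hgf : LeftInverse g f) {β : exits P → exits K} {γ : exits K → exits P}
    (hγβ : LeftInverse γ β) (hβ : ∀ e, Matched f e.1.tail (β e).1.tail) :
    LeftInverse (extend g γ) (extend f β) := by
  intro z
  by_cases hz : z ∈ P
  · rw [extend_of_mem f β hz, extend_of_mem g γ (f _).2, Subtype.coe_eta, hgf]
  obtain ⟨e, hze⟩ := exists_exits_res_eq hP hne hz
  rw [extend_of_res_eq f β e hze, extend_of_res_eq g γ (β e) (res_graft _ _), hγβ,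
    graft_graft (hβ e).length_eq_of_mem_exits.symm, ← hze, graft_res]

theorem continuousAt_extend_of_notMem (hP : IsClosed P) (hne : P.Nonempty) (f : P → K)
    (β : exits P → exits K) (hz : z ∉ P) : ContinuousAt (extend f β) z := by
  obtain ⟨e, hze⟩ := exists_exits_res_eq hP hne hz
  refine (continuous_graft (β e).1).continuousAt.congr ?_
  filter_upwards [(nhds_basis_res z).mem_of_mem (i := e.1.length) trivial] with w hw
  exact (extend_of_res_eq f β e (hw.trans hze)).symm

theorem exists_res_eq_of_continuousAt {f : P → K} {x : P} (hf : ContinuousAt f x) (m : ℕ) :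
    ∃ n, m ≤ n ∧ ∀ y : P, res (y : ℕ → ℕ) n = res x n → res (f y : ℕ → ℕ) m = res (f x) m := by
  have := continuous_subtype_val.continuousAt.comp hf
  rw [ContinuousAt, nhds_subtype, ((nhds_basis_res _).comap _).tendsto_iff (nhds_basis_res _)]
    at this
  obtain ⟨n, -, hn⟩ := this m trivial
  exact ⟨max n m, le_max_right _ _, fun y hy => hn y (res_eq_res_of_le hy (le_max_left _ _))⟩

theorem continuousAt_extend_of_mem (hP : IsClosed P) {f : P → K} {β : exits P → exits K}
    (hβ : ∀ e, Matched f e.1.tail (β e).1.tail) {x : ℕ → ℕ} (hx : x ∈ P)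
    (hf : ContinuousAt f ⟨x, hx⟩) : ContinuousAt (extend f β) x := by
  rw [ContinuousAt, (nhds_basis_res x).tendsto_iff (nhds_basis_res _)]
  intro m _
  obtain ⟨n, hmn, hn⟩ := exists_res_eq_of_continuousAt hf m
  refine ⟨n, trivial, fun z (hz : res z n = res x n) => ?_⟩
  rw [mem_ofPred_eq, extend_of_mem f β hx]
  by_cases hzP : z ∈ P
  · rw [extend_of_mem f β hzP]
    exact hn ⟨z, hzP⟩ hz
  obtain ⟨e, hze⟩ := exists_exits_res_eq hP ⟨x, hx⟩ hzP
  have hn_lt : n < e.1.length :=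
    lt_length_of_res_eq_mem_exits e.2 hze (hz ▸ res_mem_prefixes hx n)
  have hlen := (hβ e).length_eq_of_mem_exits
  obtain ⟨y, hyz, hyF⟩ := hβ e
  rw [List.length_tail] at hyz hyF
  have hze' : e.1.tail = res z (e.1.length - 1) := by rw [← tail_res, hze]
  have hFz : res (extend f β z) (e.1.length - 1) = res (f y : ℕ → ℕ) (e.1.length - 1) := by
    rw [extend_of_res_eq f β e hze, hyF, ← hlen, ← tail_res, res_graft]
  calc res (extend f β z) m = res (f y : ℕ → ℕ) m := res_eq_res_of_le hFz (by omega)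
    _ = res (f ⟨x, hx⟩ : ℕ → ℕ) m :=
      hn y ((res_eq_res_of_le (hyz.trans hze') (by omega)).trans hz)

theorem continuous_extend (hP : IsClosed P) (hne : P.Nonempty) {f : P → K} (hf : Continuous f)
    {β : exits P → exits K} (hβ : ∀ e, Matched f e.1.tail (β e).1.tail) :
    Continuous (extend f β) :=
  continuous_iff_continuousAt.2 fun z => by
    by_cases hz : z ∈ P
    exacts [continuousAt_extend_of_mem hP hβ hz hf.continuousAt,
      continuousAt_extend_of_notMem hP hne f β hz]

end KnasterReichbach

open KnasterReichbach

/-- Every homeomorphism `f` between two compact subsets `P` and `K` of the space `ℕ^ℕ`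
(the irrationals) extends to a homeomorphism of `ℕ^ℕ` onto itself. -/
theorem stmt5 (P K : Set (ℕ → ℕ)) (hP : IsCompact P) (hK : IsCompact K)
    (f : ↥P ≃ₜ ↥K) :
    ∃ F : (ℕ → ℕ) ≃ₜ (ℕ → ℕ), ∀ p : P, F (p : ℕ → ℕ) = (f p : ℕ → ℕ) := by
  rcases P.eq_empty_or_nonempty with rfl | hne
  · exact ⟨.refl _, fun p => p.2.elim⟩
  have hne' : K.Nonempty := ⟨_, (f ⟨_, hne.some_mem⟩).2⟩
  obtain ⟨β, hβ⟩ := exists_exits_equiv_matched hP hK f.toEquiv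
  have hβ' (e : exits K) : Matched f.symm e.1.tail (β.symm e).1.tail := by
    simpa using (hβ (β.symm e)).symm
  refine ⟨⟨⟨extend f β, extend f.symm β.symm, ?_, ?_⟩, ?_, ?_⟩, fun p => extend_of_mem f β p.2⟩
  · exact extend_leftInverse hP.isClosed hne f.left_inv β.left_inv hβ
  · exact extend_leftInverse hK.isClosed hne' f.right_inv β.right_inv hβ'
  · exact continuous_extend hP.isClosed hne f.continuous hβ
  · exact continuous_extend hK.isClosed hne' f.symm.continuous hβ'
end
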